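/- Let F be a finite field of characteristic p, let C be a linear code of length n over F with a permutation automorphism σ, and suppose every cycle of σ has length congruent to l modulo p, where l ≢ 0 (mod p). If C is a linear complementary dual (LCD) code with respect to the Euclidean inner product, then the projection code C_π = π(F_σ(C)) is also LCD. -/

import Mathlib

/-!
For `σ`-fixed vectors `u, w`, the inner product `u · w` splits over the cycles of `σ`, each cycle
`Ω` contributing `|Ω| u_Ω w_Ω = l · u_Ω w_Ω`; hence `u · w = l · (π u · π w)`. Now let `π w` lie in
`C_π ∩ C_π^⊥` with `w ∈ F_σ(C)`. For `v ∈ C` the orbit sum `Σ_{k < ord σ} vσ^k` lies in `F_σ(C)`,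
so `ord σ · (w · v) = w · Σ_k vσ^k = l · (π w · π(Σ_k vσ^k)) = 0`. The order of `σ` divides the
product of the cycle lengths, none of which vanishes in `F`, so `w · v = 0`. Thus
`w ∈ C ∩ C^⊥ = 0` and `π w = 0`.
-/

open Finset

/-- The action of a permutation `σ` on vectors by permuting coordinates: `(vσ) i = v (σ i)`. -/
def permAct {F : Type*} {n : ℕ} (σ : Equiv.Perm (Fin n)) (v : Fin n → F) : Fin n → F :=
  fun i => v (σ i)

open Classical in
/-- The cycle (orbit) of `σ` containing the coordinate `i`, as a `Finset`
(fixed points are counted as cycles of length 1). -/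
noncomputable def orbitOf {n : ℕ} (σ : Equiv.Perm (Fin n)) (i : Fin n) : Finset (Fin n) :=
  Finset.univ.filter (fun j => σ.SameCycle i j)

/-- The Euclidean inner product `u·v = ∑ i, u i * v i`. -/
def eInner {F : Type*} [Field F] {ι : Type*} [Fintype ι] (u v : ι → F) : F :=
  ∑ i, u i * v i

/-- The Euclidean dual of a set of vectors. -/
def dualSet {F : Type*} [Field F] {ι : Type*} [Fintype ι] (S : Set (ι → F)) : Set (ι → F) :=
  {u | ∀ v ∈ S, eInner u v = 0}

/-- A set of vectors is self-orthogonal if it is contained in its dual. -/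
def IsSelfOrthogonalSet {F : Type*} [Field F] {ι : Type*} [Fintype ι] (S : Set (ι → F)) : Prop :=
  S ⊆ dualSet S

/-- A set of vectors is self-dual if it equals its dual. -/
def IsSelfDualSet {F : Type*} [Field F] {ι : Type*} [Fintype ι] (S : Set (ι → F)) : Prop :=
  S = dualSet S

/-- A set of vectors is LCD (linear complementary dual) if it meets its dual only in `0`. -/
def IsLCDSet {F : Type*} [Field F] {ι : Type*} [Fintype ι] (S : Set (ι → F)) : Prop :=
  S ∩ dualSet S = {0}

/-- The fixed subcode `F_σ(C) = {v ∈ C : vσ = v}`. -/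
def fixedCode {F : Type*} [Field F] {n : ℕ} (σ : Equiv.Perm (Fin n))
    (C : Submodule F (Fin n → F)) : Set (Fin n → F) :=
  {v | v ∈ C ∧ permAct σ v = v}

/-- The subcode `E_σ(C) = {v ∈ C : the sum of the coordinates of v over each cycle of σ is 0}`. -/
def evenCode {F : Type*} [Field F] {n : ℕ} (σ : Equiv.Perm (Fin n))
    (C : Submodule F (Fin n → F)) : Set (Fin n → F) :=
  {v | v ∈ C ∧ ∀ i : Fin n, ∑ j ∈ orbitOf σ i, v j = 0}

/-- The setoid on coordinates whose classes are the cycles (orbits) of `σ`. -/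
def cycleSetoid {n : ℕ} (σ : Equiv.Perm (Fin n)) : Setoid (Fin n) :=
  ⟨σ.SameCycle, ⟨fun x => Equiv.Perm.SameCycle.refl σ x, fun h => h.symm, fun h h' => h.trans h'⟩⟩

/-- The set of cycles of `σ` (fixed points counted as cycles of length 1); if `σ` has `s`
cycles then `Cycles σ → F` is a copy of `F^s`. -/
abbrev Cycles {n : ℕ} (σ : Equiv.Perm (Fin n)) : Type :=
  Quotient (cycleSetoid σ)

noncomputable instance {n : ℕ} (σ : Equiv.Perm (Fin n)) : Fintype (Cycles σ) :=
  @Fintype.ofFinite _ (Quotient.finite _)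

/-- The projection `π` picking one coordinate from each cycle of `σ`; on a `σ`-fixed vector
this is the common value of the vector on each cycle. -/
noncomputable def projPi {F : Type*} {n : ℕ} (σ : Equiv.Perm (Fin n)) (v : Fin n → F) :
    Cycles σ → F :=
  fun c => v c.out

section PermAct

variable {α : Type*} {n : ℕ}

lemma permAct_permAct (σ τ : Equiv.Perm (Fin n)) (v : Fin n → α) :
    permAct σ (permAct τ v) = permAct (τ * σ) v := rfl

lemma permAct_pow_of_fixed {σ : Equiv.Perm (Fin n)} {w : Fin n → α} (hw : permAct σ w = w)
    (k : ℕ) : permAct (σ ^ k) w = w := by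
  induction k with
  | zero => rfl
  | succ k ih => rw [pow_succ, ← permAct_permAct, ih, hw]

lemma apply_eq_of_sameCycle {σ : Equiv.Perm (Fin n)} {w : Fin n → α} (hw : permAct σ w = w)
    {i j : Fin n} (hij : σ.SameCycle i j) : w i = w j := by
  obtain ⟨k, -, rfl⟩ := hij.exists_pow_eq'
  exact (congrFun (permAct_pow_of_fixed hw k) i).symm

lemma permAct_sum [AddCommMonoid α] {ι : Type*} (σ : Equiv.Perm (Fin n)) (s : Finset ι)
    (f : ι → Fin n → α) : permAct σ (∑ k ∈ s, f k) = ∑ k ∈ s, permAct σ (f k) := by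
  funext i
  simp only [permAct, Finset.sum_apply]

end PermAct

section Inner

variable {F : Type*} [Field F] {n : ℕ}

lemma eInner_zero_left {ι : Type*} [Fintype ι] (v : ι → F) : eInner 0 v = 0 := by
  simp [eInner]

lemma eInner_sum_right {ι κ : Type*} [Fintype ι] (w : ι → F) (s : Finset κ) (f : κ → ι → F) :
    eInner w (∑ k ∈ s, f k) = ∑ k ∈ s, eInner w (f k) := by
  simp only [eInner, Finset.sum_apply, Finset.mul_sum]
  exact Finset.sum_comm

lemma eInner_permAct_of_fixed {σ : Equiv.Perm (Fin n)} {w : Fin n → F} (hw : permAct σ w = w)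
    (v : Fin n → F) : eInner w (permAct σ v) = eInner w v := by
  conv_lhs => rw [← hw]
  exact Equiv.sum_comp σ fun i => w i * v i

end Inner

section Cycles

variable {n : ℕ}

lemma mem_orbitOf {σ : Equiv.Perm (Fin n)} {i j : Fin n} :
    j ∈ orbitOf σ i ↔ σ.SameCycle i j := by
  simp [orbitOf]

lemma pow_card_orbitOf_apply (σ : Equiv.Perm (Fin n)) (i : Fin n) :
    (σ ^ #(orbitOf σ i)) i = i := by
  classical
  by_cases hi : σ i = i
  · exact Equiv.Perm.pow_apply_eq_self_of_apply_eq_self hi _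
  · have horbit : orbitOf σ i = (σ.cycleOf i).support := by
      ext j
      rw [mem_orbitOf, Equiv.Perm.mem_support_cycleOf_iff' hi]
    rw [horbit, ← Equiv.Perm.cycleOf_pow_apply_self, ← (σ.isCycle_cycleOf hi).orderOf,
      pow_orderOf_eq_one, Equiv.Perm.one_apply]

lemma orderOf_dvd_prod_card_orbitOf (σ : Equiv.Perm (Fin n)) :
    orderOf σ ∣ ∏ i, #(orbitOf σ i) := by
  refine orderOf_dvd_of_pow_eq_one (Equiv.ext fun i => ?_)
  obtain ⟨m, hm⟩ := Finset.dvd_prod_of_mem (fun j => #(orbitOf σ j)) (Finset.mem_univ i)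
  rw [hm, pow_mul, Equiv.Perm.one_apply]
  exact Equiv.Perm.pow_apply_eq_self_of_apply_eq_self (pow_card_orbitOf_apply σ i) m

lemma orderOf_cast_ne_zero {F : Type*} [Field F] {σ : Equiv.Perm (Fin n)}
    (hcard : ∀ i, (#(orbitOf σ i) : F) ≠ 0) : (orderOf σ : F) ≠ 0 := by
  obtain ⟨m, hm⟩ := orderOf_dvd_prod_card_orbitOf σ
  have hprod : ((∏ i, #(orbitOf σ i) : ℕ) : F) ≠ 0 := by
    push_cast
    exact Finset.prod_ne_zero_iff.mpr fun i _ => hcard i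
  rw [hm, Nat.cast_mul] at hprod
  exact left_ne_zero_of_mul hprod

lemma mk_eq_iff_mem_orbitOf_out {σ : Equiv.Perm (Fin n)} {i : Fin n} {c : Cycles σ} :
    Quotient.mk (cycleSetoid σ) i = c ↔ i ∈ orbitOf σ c.out := by
  rw [Quotient.mk_eq_iff_out, mem_orbitOf]
  exact ⟨Equiv.Perm.SameCycle.symm, Equiv.Perm.SameCycle.symm⟩

variable {F : Type*} [Field F]

lemma eInner_of_fixed {σ : Equiv.Perm (Fin n)} {u w : Fin n → F}
    (hu : permAct σ u = u) (hw : permAct σ w = w) :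
    eInner u w = ∑ c : Cycles σ, (#(orbitOf σ c.out) : F) * (u c.out * w c.out) := by
  classical
  rw [eInner, ← Finset.sum_fiberwise Finset.univ (Quotient.mk (cycleSetoid σ))]
  refine Finset.sum_congr rfl fun c _ => ?_
  have hfiber : univ.filter (fun i => Quotient.mk (cycleSetoid σ) i = c) = orbitOf σ c.out := by
    ext i
    simp only [Finset.mem_filter, Finset.mem_univ, true_and, mk_eq_iff_mem_orbitOf_out]
  have hconst : ∀ j ∈ orbitOf σ c.out, u j * w j = u c.out * w c.out := fun j hj => by
    rw [apply_eq_of_sameCycle hu (mem_orbitOf.mp hj), apply_eq_of_sameCycle hw (mem_orbitOf.mp hj)]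
  rw [hfiber, Finset.sum_congr rfl hconst, Finset.sum_const, nsmul_eq_mul]

lemma eInner_of_fixed_eq_mul_eInner_projPi {σ : Equiv.Perm (Fin n)} {a : F}
    (hcard : ∀ i, (#(orbitOf σ i) : F) = a) {u w : Fin n → F}
    (hu : permAct σ u = u) (hw : permAct σ w = w) :
    eInner u w = a * eInner (projPi σ u) (projPi σ w) := by
  rw [eInner_of_fixed hu hw, eInner, Finset.mul_sum]
  simp only [hcard, projPi]

end Cycles

section OrbitSum

variable {M : Type*} {n : ℕ}

noncomputable def orbitSum [AddCommMonoid M] (σ : Equiv.Perm (Fin n)) (v : Fin n → M) :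
    Fin n → M :=
  ∑ k ∈ range (orderOf σ), permAct (σ ^ k) v

lemma orbitSum_mem {R : Type*} [Semiring R] [AddCommMonoid M] [Module R M]
    {σ : Equiv.Perm (Fin n)} {C : Submodule R (Fin n → M)}
    (hC : ∀ v, v ∈ C ↔ permAct σ v ∈ C) {v : Fin n → M} (hv : v ∈ C) : orbitSum σ v ∈ C := by
  have hpow : ∀ k : ℕ, permAct (σ ^ k) v ∈ C := by
    intro k
    induction k with
    | zero => exact hv
    | succ k ih => rw [pow_succ, ← permAct_permAct]; exact (hC _).mp ih
  exact Submodule.sum_mem _ fun k _ => hpow k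

lemma permAct_orbitSum [AddCommGroup M] (σ : Equiv.Perm (Fin n)) (v : Fin n → M) :
    permAct σ (orbitSum σ v) = orbitSum σ v := by
  set f : ℕ → Fin n → M := fun k => permAct (σ ^ k) v
  have hshift : permAct σ (orbitSum σ v) = ∑ k ∈ range (orderOf σ), f (k + 1) := by
    simp only [orbitSum, permAct_sum, permAct_permAct, f, pow_succ]
  have hperiod : f (orderOf σ) = f 0 := by simp only [f, pow_orderOf_eq_one, pow_zero]
  rw [hshift]
  refine add_right_cancel (b := f 0) ?_
  rw [← Finset.sum_range_succ', Finset.sum_range_succ, hperiod]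
  rfl

lemma eInner_orbitSum_of_fixed {F : Type*} [Field F] {σ : Equiv.Perm (Fin n)} {w : Fin n → F}
    (hw : permAct σ w = w) (v : Fin n → F) :
    eInner w (orbitSum σ v) = orderOf σ * eInner w v := by
  have hterm : ∀ k : ℕ, eInner w (permAct (σ ^ k) v) = eInner w v := fun k =>
    eInner_permAct_of_fixed (permAct_pow_of_fixed hw k) v
  rw [orbitSum, eInner_sum_right, Finset.sum_congr rfl fun k _ => hterm k, Finset.sum_const,
    Finset.card_range, nsmul_eq_mul]

end OrbitSum

section LCD

variable {F : Type*} [Field F] {n : ℕ}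

lemma mem_dualSet_of_projPi_mem_dualSet {σ : Equiv.Perm (Fin n)} {C : Submodule F (Fin n → F)}
    (hC : ∀ v, v ∈ C ↔ permAct σ v ∈ C) {a : F} (hcard : ∀ i, (#(orbitOf σ i) : F) = a)
    (ha : a ≠ 0) {w : Fin n → F} (hw : permAct σ w = w)
    (hπw : projPi σ w ∈ dualSet (projPi σ '' fixedCode σ C)) :
    w ∈ dualSet (C : Set (Fin n → F)) := by
  intro v hv
  have horder : (orderOf σ : F) ≠ 0 := orderOf_cast_ne_zero fun i => hcard i ▸ ha
  have hsum : eInner w (orbitSum σ v) = 0 := by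
    rw [eInner_of_fixed_eq_mul_eInner_projPi hcard hw (permAct_orbitSum σ v),
      hπw _ ⟨_, ⟨orbitSum_mem hC hv, permAct_orbitSum σ v⟩, rfl⟩, mul_zero]
  rw [eInner_orbitSum_of_fixed hw] at hsum
  exact (mul_eq_zero.mp hsum).resolve_left horder

theorem isLCDSet_projPi_fixedCode {σ : Equiv.Perm (Fin n)} {C : Submodule F (Fin n → F)}
    (hC : ∀ v, v ∈ C ↔ permAct σ v ∈ C) {a : F} (hcard : ∀ i, (#(orbitOf σ i) : F) = a)
    (ha : a ≠ 0) (h : IsLCDSet (C : Set (Fin n → F))) :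
    IsLCDSet (projPi σ '' fixedCode σ C) := by
  ext x
  simp only [Set.mem_inter_iff, Set.mem_singleton_iff]
  constructor
  · rintro ⟨⟨w, ⟨hwC, hw⟩, rfl⟩, hπw⟩
    have hw0 : w ∈ (C : Set (Fin n → F)) ∩ dualSet C :=
      ⟨hwC, mem_dualSet_of_projPi_mem_dualSet hC hcard ha hw hπw⟩
    rw [h, Set.mem_singleton_iff] at hw0
    rw [hw0]
    rfl
  · rintro rfl
    exact ⟨⟨0, ⟨C.zero_mem, rfl⟩, rfl⟩, fun v _ => eInner_zero_left v⟩

end LCD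

theorem proj_code_of_code_general {F : Type*} [Field F] (p : ℕ) [CharP F p]
    {n : ℕ} (σ : Equiv.Perm (Fin n)) (C : Submodule F (Fin n → F))
    (hC : ∀ v, v ∈ C ↔ permAct σ v ∈ C)
    (l : ℕ) (hl : ¬ l ≡ 0 [MOD p])
    (hcyc : ∀ i : Fin n, (orbitOf σ i).card ≡ l [MOD p])
    (h : IsLCDSet (C : Set (Fin n → F))) :
    IsLCDSet (projPi σ '' fixedCode σ C) := by
  have hlF : (l : F) ≠ 0 := by
    rwa [Ne, CharP.cast_eq_zero_iff F p, ← Nat.modEq_zero_iff_dvd]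
  exact isLCDSet_projPi_fixedCode hC (fun i => CharP.natCast_eq_natCast' F p (hcyc i)) hlF h

/-- Let `C` be a linear code over a finite field of characteristic `p` with
a permutation automorphism `σ`, all of whose cycles have length congruent to `l ≢ 0 (mod p)`.
If `C` is LCD with respect to the Euclidean inner product, then so is the projection
code `C_π = π(F_σ(C))`. -/
theorem proj_code_of_code {F : Type*} [Field F] [Fintype F] (p : ℕ) [CharP F p]
    {n : ℕ} (σ : Equiv.Perm (Fin n)) (C : Submodule F (Fin n → F))
    (hC : ∀ v, v ∈ C ↔ permAct σ v ∈ C)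
    (l : ℕ) (hl : ¬ l ≡ 0 [MOD p])
    (hcyc : ∀ i : Fin n, (orbitOf σ i).card ≡ l [MOD p])
    (h : IsLCDSet (C : Set (Fin n → F))) :
    IsLCDSet (projPi σ '' fixedCode σ C) :=
  proj_code_of_code_general p σ C hC l hl hcyc h
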